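/- arXiv:2510.08038 — 3 statements merged into one kernel-verified Lean document; each statement's English description precedes it below -/
import Mathlib

section
/- Let τ(t) be a formal power series in t = (t_1, t_2, ...) with τ(0) invertible, and suppose the wave function ψ(t, x) = (τ(t - [x^{-1}])/τ(t)) e^{ξ(t,x)} satisfies the differential Fay identity: (x - z)(τ(t - [x^{-1}] - [z^{-1}])τ(t) - τ(t - [x^{-1}])τ(t - [z^{-1}])) = ∂τ(t - [x^{-1}])·τ(t - [z^{-1}]) - ∂τ(t - [z^{-1}])·τ(t - [x^{-1}]), where ∂ = ∂/∂t_1. Then ψ(t - [x^{-1}], z)/ψ(t, z) = x^{-1} ∂ log(ψ(t, x)/ψ(t, z)). -/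
/-! For a map obeying the Leibniz rule, the logarithmic derivative turns the products and quotients
forming `ψ` into sums, so `∂ log (ψ(t,x)/ψ(t,z)) = x - z + ∂τ(t-[x⁻¹])/τ(t-[x⁻¹]) - ∂τ(t-[z⁻¹])/τ(t-[z⁻¹])`,
and after clearing denominators the claim is `τ(t)` times the differential Fay identity. -/

section Leibniz

variable {K : Type*} [Field K] {d : K → K}

theorem logDeriv_mul_of_leibniz (hmul : ∀ u v : K, d (u * v) = u * d v + v * d u)
    {u v : K} (hu : u ≠ 0) (hv : v ≠ 0) :
    d (u * v) / (u * v) = d u / u + d v / v := by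
  rw [hmul]
  field_simp
  ring

theorem logDeriv_div_of_leibniz (hmul : ∀ u v : K, d (u * v) = u * d v + v * d u)
    {u v : K} (hu : u ≠ 0) (hv : v ≠ 0) :
    d (u / v) / (u / v) = d u / u - d v / v := by
  have key := logDeriv_mul_of_leibniz hmul (div_ne_zero hu hv) hv
  rw [div_mul_cancel₀ u hv] at key
  rw [key]
  ring

theorem logDeriv_of_eq_mul_self {e c : K} (he : e ≠ 0) (hde : d e = c * e) :
    d e / e = c := by
  rw [hde, mul_div_cancel_right₀ c he]

theorem logDeriv_wave_of_leibniz (hmul : ∀ u v : K, d (u * v) = u * d v + v * d u)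
    {c a b e : K} (ha : a ≠ 0) (hb : b ≠ 0) (he : e ≠ 0) (hde : d e = c * e) :
    d (b / a * e) / (b / a * e) = d b / b - d a / a + c := by
  rw [logDeriv_mul_of_leibniz hmul (div_ne_zero hb ha) he, logDeriv_div_of_leibniz hmul hb ha,
    logDeriv_of_eq_mul_self he hde]

end Leibniz

/-- The field elements encode the paper's series: `a = τ(t)`, `ax = τ(t - [x⁻¹])`,
`az = τ(t - [z⁻¹])`, `axz = τ(t - [x⁻¹] - [z⁻¹])`, `ex = e^{ξ(t,x)}`, `ez = e^{ξ(t,z)}`;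
`e^{ξ(t - [x⁻¹], z)} = (1 - z/x) e^{ξ(t,z)}` since `∑ (z/x)ⁱ/i = -log(1 - z/x)`. -/
theorem stmt_10_general (R : Type) [Field R] (d : R → R)
    (hmul : ∀ u v : R, d (u * v) = u * d v + v * d u)
    (x z a ax az axz ex ez : R)
    (hx : x ≠ 0)
    (ha : a ≠ 0) (hax : ax ≠ 0) (haz : az ≠ 0) (hex : ex ≠ 0) (hez : ez ≠ 0)
    (hdex : d ex = x * ex) (hdez : d ez = z * ez)
    (fay : (x - z) * (axz * a - ax * az) = d ax * az - d az * ax) :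
    (axz / ax * ((1 - z / x) * ez)) / (az / a * ez) =
      x⁻¹ * (d (ax / a * ex) / (ax / a * ex) - d (az / a * ez) / (az / a * ez)) := by
  rw [logDeriv_wave_of_leibniz hmul ha hax hex hdex, logDeriv_wave_of_leibniz hmul ha haz hez hdez]
  field_simp
  linear_combination a * fay

/-- Differential Fay identity ⟹ the Bäcklund–Darboux relation for wave functions.

We work abstractly in a (commutative) field `R` containing all the quantities
involved, equipped with a derivation `d` (playing the role of `∂ = ∂/∂t_1`):
* `a = τ(t)`, `ax = τ(t - [x⁻¹])`, `az = τ(t - [z⁻¹])`, `axz = τ(t - [x⁻¹] - [z⁻¹])`;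
* `ex = e^{ξ(t,x)}`, `ez = e^{ξ(t,z)}`, so that `d ex = x·ex`, `d ez = z·ez`, and
  `e^{ξ(t - [x⁻¹], z)} = (1 - z/x)·ez`;
* the wave functions are `ψ(t,x) = (ax/a)·ex`, `ψ(t,z) = (az/a)·ez`, and
  `ψ(t - [x⁻¹], z) = (axz/ax)·((1 - z/x)·ez)`.

Assuming the differential Fay identity
`(x - z)(axz·a - ax·az) = d(ax)·az - d(az)·ax`, we conclude
`ψ(t - [x⁻¹], z)/ψ(t, z) = x⁻¹·∂ log(ψ(t,x)/ψ(t,z))`,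
where `∂ log u = d u / u`. -/
theorem stmt_10 (R : Type) [Field R] (d : R → R)
    (hadd : ∀ u v : R, d (u + v) = d u + d v)
    (hmul : ∀ u v : R, d (u * v) = u * d v + v * d u)
    (x z a ax az axz ex ez : R)
    (hx : x ≠ 0) (hxz : x ≠ z)
    (ha : a ≠ 0) (hax : ax ≠ 0) (haz : az ≠ 0) (hex : ex ≠ 0) (hez : ez ≠ 0)
    (hdex : d ex = x * ex) (hdez : d ez = z * ez)
    (fay : (x - z) * (axz * a - ax * az) = d ax * az - d az * ax) :
    (axz / ax * ((1 - z / x) * ez)) / (az / a * ez) =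
      x⁻¹ * (d (ax / a * ex) / (ax / a * ex) - d (az / a * ez) / (az / a * ez)) :=
  stmt_10_general R d hmul x z a ax az axz ex ez hx ha hax haz hex hez hdex hdez fay
end

section
/- For a pseudo-differential operator A = ∑ a_i ∂^{-i} over the differential ring of formal power series, define res A := a_{-1} (the coefficient of ∂^{-1}). Then for any function (multiplication operator) Φ invertible and any differential operator Q (one with only nonnegative powers of ∂): res(∂ ∘ Φ^{-1} ∘ Q ∘ Φ ∘ ∂^{-1}) = ∂(Φ^{-1} · Q(Φ)), where Q(Φ) denotes the application of the differential operator Q to Φ. -/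
/-! Formal pseudo-differential operators `∑_{j ≤ N} a_j ∂^j` over a commutative
differential ℚ-algebra `R`: coefficient functions `ℤ → R` whose support is
bounded above.  The coefficient of `∂^n` in `(∑ a_i ∂^i)∘(∑ b_j ∂^j)` is
`∑_{m≥0, i} C(i,m)·a_i·d^m(b_{n+m-i})`, where `C(i,m)` is the generalized
binomial coefficient. -/

structure PDO (R : Type) [CommRing R] where
  coeff : ℤ → R
  bdd : ∃ N : ℤ, ∀ n : ℤ, N < n → coeff n = 0

namespace PDO

variable {R : Type} [CommRing R] [Algebra ℚ R]

instance : Zero (PDO R) := ⟨⟨fun _ => 0, ⟨0, fun _ _ => rfl⟩⟩⟩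

instance : One (PDO R) :=
  ⟨⟨fun n => if n = 0 then 1 else 0, ⟨0, fun n hn => if_neg (by omega)⟩⟩⟩

instance : Add (PDO R) :=
  ⟨fun A B => ⟨fun n => A.coeff n + B.coeff n, by
    obtain ⟨Na, hA⟩ := A.bdd; obtain ⟨Nb, hB⟩ := B.bdd
    exact ⟨max Na Nb, fun n hn => by
      show A.coeff n + B.coeff n = 0
      rw [hA n (by omega), hB n (by omega), add_zero]⟩⟩⟩

instance : Neg (PDO R) :=
  ⟨fun A => ⟨fun n => -A.coeff n, by
    obtain ⟨Na, hA⟩ := A.bdd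
    exact ⟨Na, fun n hn => by show -A.coeff n = 0; rw [hA n hn, neg_zero]⟩⟩⟩

instance : Sub (PDO R) := ⟨fun A B => A + -B⟩

/-- Generalized binomial coefficient `C(n, m) = n(n-1)⋯(n-m+1)/m!` for `n : ℤ`. -/
noncomputable def qchoose (n : ℤ) (m : ℕ) : ℚ :=
  (∏ j ∈ Finset.range m, ((n : ℚ) - (j : ℚ))) / (m.factorial : ℚ)

theorem iterate_d_zero (d : Derivation ℚ R R) (m : ℕ) : (⇑d)^[m] (0 : R) = 0 := by
  induction m with
  | zero => rfl
  | succ m ih => rw [Function.iterate_succ_apply', ih, map_zero]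

/-- Composition of pseudo-differential operators (depends on the derivation `d`). -/
noncomputable def mul (d : Derivation ℚ R R) (A B : PDO R) : PDO R where
  coeff n := ∑ᶠ (m : ℕ) (i : ℤ),
    algebraMap ℚ R (qchoose i m) * A.coeff i * (⇑d)^[m] (B.coeff (n + m - i))
  bdd := by
    obtain ⟨Na, hA⟩ := A.bdd; obtain ⟨Nb, hB⟩ := B.bdd
    refine ⟨Na + Nb, fun n hn => ?_⟩
    refine finsum_eq_zero_of_forall_eq_zero fun m =>
      finsum_eq_zero_of_forall_eq_zero fun i => ?_
    by_cases h : i ≤ Na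
    · rw [hB (n + m - i) (by omega), iterate_d_zero, mul_zero]
    · rw [hA i (by omega), mul_zero, zero_mul]

/-- Formal adjoint: `(∑ a_i ∂^i)† = ∑ (-∂)^i ∘ a_i`; its coefficient of `∂^n`
is `∑_{m≥0} (-1)^{n+m} C(n+m, m)·d^m(a_{n+m})`. -/
noncomputable def dagger (d : Derivation ℚ R R) (A : PDO R) : PDO R where
  coeff n := ∑ᶠ m : ℕ,
    algebraMap ℚ R ((-1 : ℚ) ^ (n + (m : ℤ)) * qchoose (n + m) m) * (⇑d)^[m] (A.coeff (n + m))
  bdd := by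
    obtain ⟨Na, hA⟩ := A.bdd
    refine ⟨Na, fun n hn => ?_⟩
    refine finsum_eq_zero_of_forall_eq_zero fun m => ?_
    rw [hA (n + m) (by omega), iterate_d_zero, mul_zero]

/-- The differential-operator part `A_+` (nonnegative powers of `∂`). -/
def pos (A : PDO R) : PDO R :=
  ⟨fun n => if 0 ≤ n then A.coeff n else 0, by
    obtain ⟨Na, hA⟩ := A.bdd
    exact ⟨Na, fun n hn => by show (if 0 ≤ n then A.coeff n else 0) = 0; rw [hA n hn, ite_self]⟩⟩

/-- The strictly negative part `A_-`. -/
def negPart (A : PDO R) : PDO R :=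
  ⟨fun n => if n < 0 then A.coeff n else 0, ⟨0, fun n hn => if_neg (by omega)⟩⟩

/-- The multiplication operator by `a ∈ R`, as a pseudo-differential operator. -/
def ofFun (a : R) : PDO R := ⟨fun n => if n = 0 then a else 0, ⟨0, fun n hn => if_neg (by omega)⟩⟩

/-- The operator `∂`. -/
def del : PDO R := ⟨fun n => if n = 1 then 1 else 0, ⟨1, fun n hn => if_neg (by omega)⟩⟩

/-- The operator `∂⁻¹`. -/
def delInv : PDO R := ⟨fun n => if n = -1 then 1 else 0, ⟨0, fun n hn => if_neg (by omega)⟩⟩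

/-- The residue: coefficient of `∂⁻¹`. -/
def res (A : PDO R) : R := A.coeff (-1)

/-- Application of a differential operator `Q = ∑_{n≥0} q_n ∂^n` to `Φ ∈ R`. -/
noncomputable def applyOp (d : Derivation ℚ R R) (Q : PDO R) (Φ : R) : R :=
  ∑ᶠ n : ℕ, Q.coeff (n : ℤ) * (⇑d)^[n] Φ

/-!
Composing with an operator that has a single coefficient is explicit by the Leibniz rule.
Writing `C = Q ∘ Φ ∘ ∂⁻¹`, its coefficient of `∂^{-1-k}` is `∑_m C(m-k, m) q_{m-k} d^m Φ`,
so `C_{-1} = Q(Φ)`, while `C_{-2} = 0` because `C(m-1, m)` vanishes for `m ≥ 1` and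
`q_{-1} = 0`. Finally `∂ ∘ B = B' + B ∘ ∂` gives
`res(∂ ∘ Φ⁻¹ ∘ C) = d(Φ⁻¹ C_{-1}) + Φ⁻¹ C_{-2}`.
-/

theorem qchoose_zero_right (n : ℤ) : qchoose n 0 = 1 := by
  simp [qchoose]

theorem qchoose_eq_zero_of_lt {n : ℤ} {m : ℕ} (h0 : 0 ≤ n) (h : n < m) : qchoose n m = 0 := by
  have hmem : n.toNat ∈ Finset.range m := Finset.mem_range.2 (by omega)
  have hfactor : (n : ℚ) - (n.toNat : ℕ) = 0 := by
    rw [sub_eq_zero]; exact_mod_cast (Int.toNat_of_nonneg h0).symm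
  rw [qchoose, Finset.prod_eq_zero hmem hfactor, zero_div]

theorem qchoose_self (m : ℕ) : qchoose m m = 1 := by
  have hprod : ∏ j ∈ Finset.range m, (((m : ℤ) : ℚ) - j) = m.factorial := by
    rw [← Finset.prod_range_reflect]
    calc ∏ j ∈ Finset.range m, (((m : ℤ) : ℚ) - ((m - 1 - j : ℕ) : ℚ))
        = ∏ j ∈ Finset.range m, ((j + 1 : ℕ) : ℚ) := by
          refine Finset.prod_congr rfl fun j hj => ?_
          rw [Finset.mem_range] at hj
          rw [Nat.cast_sub (by omega), Nat.cast_sub (by omega)]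
          push_cast; ring
      _ = m.factorial := by rw [← Nat.cast_prod, Finset.prod_range_add_one_eq_factorial]
  rw [qchoose, hprod, div_self (by exact_mod_cast m.factorial_ne_zero)]

theorem finsum_qchoose_natCast (k : ℕ) (f : ℕ → R) :
    ∑ᶠ m : ℕ, algebraMap ℚ R (qchoose k m) * f m =
      ∑ m ∈ Finset.range (k + 1), algebraMap ℚ R (qchoose k m) * f m := by
  refine finsum_eq_finsetSum_of_support_subset _ fun m hm => ?_
  rw [Finset.coe_range, Set.mem_Iio]
  by_contra hkm
  rw [Function.mem_support, qchoose_eq_zero_of_lt (by omega) (by omega), map_zero,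
    zero_mul] at hm
  exact hm rfl

theorem coeff_mul_of_single_left (d : Derivation ℚ R R) {A : PDO R} {k : ℤ} {a : R}
    (hA : ∀ i, A.coeff i = if i = k then a else 0) (B : PDO R) (n : ℤ) :
    (mul d A B).coeff n =
      ∑ᶠ m : ℕ, algebraMap ℚ R (qchoose k m) * (a * (⇑d)^[m] (B.coeff (n + m - k))) := by
  refine finsum_congr fun m => ?_
  rw [finsum_eq_single _ k fun i hi => by rw [hA, if_neg hi, mul_zero, zero_mul], hA, if_pos rfl,
    mul_assoc]

theorem coeff_mul_of_single_right (d : Derivation ℚ R R) (A : PDO R) {B : PDO R} {k : ℤ} {b : R}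
    (hB : ∀ j, B.coeff j = if j = k then b else 0) (n : ℤ) :
    (mul d A B).coeff n =
      ∑ᶠ m : ℕ, algebraMap ℚ R (qchoose (n + m - k) m) * A.coeff (n + m - k) * (⇑d)^[m] b := by
  refine finsum_congr fun m => ?_
  rw [finsum_eq_single _ (n + m - k) fun i hi => by
    rw [hB, if_neg (by omega), iterate_d_zero, mul_zero], hB, if_pos (by ring)]

theorem coeff_ofFun_mul (d : Derivation ℚ R R) (a : R) (B : PDO R) (n : ℤ) :
    (mul d (ofFun a) B).coeff n = a * B.coeff n := by
  rw [coeff_mul_of_single_left d (fun _ => rfl), ← Nat.cast_zero,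
    finsum_qchoose_natCast, Finset.sum_range_one, qchoose_zero_right]
  simp

theorem coeff_del_mul (d : Derivation ℚ R R) (B : PDO R) (n : ℤ) :
    (mul d del B).coeff n = B.coeff (n - 1) + d (B.coeff n) := by
  rw [coeff_mul_of_single_left d (fun _ => rfl), ← Nat.cast_one,
    finsum_qchoose_natCast, Finset.sum_range_succ, Finset.sum_range_one, qchoose_zero_right,
    qchoose_self]
  simp

theorem coeff_ofFun_mul_delInv (d : Derivation ℚ R R) (a : R) (n : ℤ) :
    (mul d (ofFun a) delInv).coeff n = if n = -1 then a else 0 := by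
  rw [coeff_ofFun_mul]
  change a * (if n = -1 then 1 else 0) = _
  rw [mul_ite, mul_one, mul_zero]

theorem coeff_mul_ofFun_delInv_neg_one (d : Derivation ℚ R R) (Q : PDO R) (Φ : R) :
    (mul d Q (mul d (ofFun Φ) delInv)).coeff (-1) = applyOp d Q Φ := by
  rw [coeff_mul_of_single_right d Q (coeff_ofFun_mul_delInv d Φ), applyOp]
  refine finsum_congr fun m => ?_
  rw [show (-1 : ℤ) + m - -1 = m by ring, qchoose_self, map_one, one_mul]

theorem coeff_mul_ofFun_delInv_neg_two (d : Derivation ℚ R R) {Q : PDO R}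
    (hQ : ∀ n : ℤ, n < 0 → Q.coeff n = 0) (Φ : R) :
    (mul d Q (mul d (ofFun Φ) delInv)).coeff (-2) = 0 := by
  rw [coeff_mul_of_single_right d Q (coeff_ofFun_mul_delInv d Φ)]
  refine finsum_eq_zero_of_forall_eq_zero fun m => ?_
  rcases Nat.eq_zero_or_pos m with rfl | hm
  · rw [hQ _ (by norm_num), mul_zero, zero_mul]
  · rw [qchoose_eq_zero_of_lt (by omega) (by omega), map_zero, zero_mul, zero_mul]

end PDO

open PDO in
theorem stmt_15_general {R : Type} [CommRing R] [Algebra ℚ R] (d : Derivation ℚ R R)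
    (Q : PDO R) (hQ : ∀ n : ℤ, n < 0 → Q.coeff n = 0) (Φ : R) :
    res (mul d del (mul d (ofFun (Ring.inverse Φ)) (mul d Q (mul d (ofFun Φ) delInv)))) =
      d (Ring.inverse Φ * applyOp d Q Φ) := by
  rw [res, coeff_del_mul, show (-1 : ℤ) - 1 = -2 by norm_num, coeff_ofFun_mul, coeff_ofFun_mul,
    coeff_mul_ofFun_delInv_neg_two d hQ, coeff_mul_ofFun_delInv_neg_one, mul_zero, zero_add]

open PDO in
/-- For invertible `Φ` and a differential operator `Q` (only nonnegative powers
of `∂`): `res(∂ ∘ Φ⁻¹ ∘ Q ∘ Φ ∘ ∂⁻¹) = ∂(Φ⁻¹ · Q(Φ))`. -/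
theorem stmt_15 {R : Type} [CommRing R] [Algebra ℚ R] (d : Derivation ℚ R R)
    (Q : PDO R) (hQ : ∀ n : ℤ, n < 0 → Q.coeff n = 0) (Φ : R) (hΦ : IsUnit Φ) :
    res (mul d del (mul d (ofFun (Ring.inverse Φ)) (mul d Q (mul d (ofFun Φ) delInv)))) =
      d (Ring.inverse Φ * applyOp d Q Φ) :=
  stmt_15_general d Q hQ Φ
end

section
/- The operator α_n := ∑_{i ∈ ℤ} θ_i ∘ θ†_{i+n} (for n ≠ 0) acts on basis wedges of the fermionic Fock space by α_n(z^{a_1} ∧ z^{a_2} ∧ ⋯) = ∑_{j≥1} z^{a_1} ∧ ⋯ ∧ z^{a_j - n} ∧ ⋯, where the sum has only finitely many nonzero terms in each graded piece. -/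
noncomputable section
open Classical

/-! The fermionic Fock space, modelled via "Maya diagrams": a basis wedge
`z^{a_1} ∧ z^{a_2} ∧ ⋯` (with `a_1 > a_2 > ⋯` admissible) is encoded by the
set `S = {a_1, a_2, ...} ⊆ ℤ`, which contains all sufficiently small integers
and no sufficiently large ones.  Under this encoding, `θ_a` prepends `z^a`
(and re-sorts, with sign `(-1)^{#{t ∈ S | t > a}}`), and `θ†_a` deletes `z^a`
with sign `(-1)^{j-1}` where `j - 1 = #{t ∈ S | t > a}` is the number of
factors preceding `z^a`. -/

/-- Admissible index sets (images of admissible decreasing sequences). -/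
def Adm : Type :=
  {S : Set ℤ // ∃ A B : ℤ, (∀ m : ℤ, m < A → m ∈ S) ∧ (∀ m : ℤ, B < m → m ∉ S)}

/-- The fermionic Fock space: formal `ℚ`-linear combinations of basis wedges. -/
abbrev Fock : Type := Adm →₀ ℚ

/-- The sign `(-1)^{#{t ∈ S | t > a}}` arising from moving `z^a` past the
factors `z^t`, `t ∈ S`, `t > a`. -/
def wsign (S : Set ℤ) (a : ℤ) : ℚ := (-1) ^ ({t : ℤ | t ∈ S ∧ a < t}.ncard)

/-- `θ_a` on a basis wedge: prepend `z^a` and sort. -/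
def theta (a : ℤ) (S : Adm) : Fock :=
  if a ∈ S.1 then 0 else
    wsign S.1 a • Finsupp.single ⟨insert a S.1, by
      obtain ⟨A, B, h1, h2⟩ := S.2
      refine ⟨min A a, max B a, fun m hm => Set.mem_insert_iff.2 (Or.inr (h1 m (by omega))),
        fun m hm => ?_⟩
      simp only [Set.mem_insert_iff, not_or]
      exact ⟨by omega, h2 m (by omega)⟩⟩ 1

/-- `θ†_a` on a basis wedge: delete `z^a` (with sign), or `0` if absent. -/
def thetaDag (a : ℤ) (S : Adm) : Fock :=
  if a ∈ S.1 then
    wsign S.1 a • Finsupp.single ⟨S.1 \ {a}, by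
      obtain ⟨A, B, h1, h2⟩ := S.2
      refine ⟨min A a, B, fun m hm => ⟨h1 m (by omega), ?_⟩, fun m hm hc => h2 m hm hc.1⟩
      simp only [Set.mem_singleton_iff]
      omega⟩ 1
  else 0

/-- Linear extension of `θ_a` to the Fock space. -/
def thetaL (a : ℤ) (v : Fock) : Fock := v.sum fun S c => c • theta a S

/-- `α_n = ∑_{i ∈ ℤ} θ_i ∘ θ†_{i+n}` applied to a basis wedge. -/
def alphaOp (n : ℤ) (S : Adm) : Fock := ∑ᶠ i : ℤ, thetaL i (thetaDag (i + n) S)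

/-- The term of index `s ∈ S` (i.e. position `j` with `s = a_j`) of
`∑_{j≥1} z^{a_1} ∧ ⋯ ∧ z^{a_j - n} ∧ ⋯`: replace `s` by `s - n` in place;
the wedge vanishes if `s - n` already occurs, and otherwise sorting it
contributes the sign `(-1)^{#{t ∈ S, strictly between s - n and s}}`. -/
def moveTerm (n : ℤ) (S : Adm) (s : ℤ) : Fock :=
  if s ∈ S.1 then
    (if s - n ∈ S.1 then 0 else
      ((-1 : ℚ) ^ ({t : ℤ | t ∈ S.1 ∧ min (s - n) s < t ∧ t < max (s - n) s}.ncard)) •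
        Finsupp.single ⟨insert (s - n) (S.1 \ {s}), by
          obtain ⟨A, B, h1, h2⟩ := S.2
          refine ⟨min (min A (s - n)) s, max B (s - n), fun m hm =>
            Set.mem_insert_iff.2 (Or.inr ⟨h1 m (by omega), by
              simp only [Set.mem_singleton_iff]; omega⟩), fun m hm => ?_⟩
          simp only [Set.mem_insert_iff, Set.mem_diff, not_or]
          exact ⟨by omega, fun hc => absurd hc.1 (h2 m (by omega))⟩⟩ 1)
  else 0

/-! `θ_i θ†_{i+n}` deletes `z^{i+n}` and inserts `z^i`, which is the term of
`∑_j z^{a_1} ∧ ⋯ ∧ z^{a_j - n} ∧ ⋯` with `a_j = i + n`. The product of the two signs is the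
parity of the entries strictly between `i` and `i + n`: those above both are passed twice.
Both sums vanish unless `i + n ∈ S` and `i ∉ S`, which confines the index to a bounded interval. -/

lemma Adm.bddAbove (S : Adm) : BddAbove S.1 := by
  obtain ⟨-, B, -, hB⟩ := S.2
  exact ⟨B, fun m hm => not_lt.1 fun h => hB m h hm⟩

lemma Adm.bddBelow_compl (S : Adm) : BddBelow S.1ᶜ := by
  obtain ⟨A, -, hA, -⟩ := S.2
  exact ⟨A, fun m hm => not_lt.1 fun h => hm (hA m h)⟩

lemma finite_sep_lt {S : Set ℤ} (hS : BddAbove S) (x : ℤ) : {t ∈ S | x < t}.Finite :=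
  BddBelow.finite_of_bddAbove ⟨x, fun _ ht => ht.2.le⟩ (hS.mono fun _ ht => ht.1)

lemma ncard_sep_lt_eq_add {S : Set ℤ} (hS : BddAbove S) {x y : ℤ} (hxy : x < y) (hy : y ∉ S) :
    {t ∈ S | x < t}.ncard = {t ∈ S | y < t}.ncard + {t ∈ S | x < t ∧ t < y}.ncard := by
  have hsplit : {t ∈ S | x < t} = {t ∈ S | y < t} ∪ {t ∈ S | x < t ∧ t < y} := by
    ext t
    simp only [Set.mem_ofPred_eq, Set.mem_union]
    constructor
    · rintro ⟨htS, hxt⟩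
      rcases lt_trichotomy y t with h | rfl | h
      · exact .inl ⟨htS, h⟩
      · exact absurd htS hy
      · exact .inr ⟨htS, hxt, h⟩
    · rintro (⟨htS, h⟩ | ⟨htS, h, -⟩) <;> exact ⟨htS, by omega⟩
  have hdisj : Disjoint {t ∈ S | y < t} {t ∈ S | x < t ∧ t < y} :=
    Set.disjoint_left.2 fun t h h' => (h.2.trans h'.2.2).false
  rw [hsplit, Set.ncard_union_eq hdisj (finite_sep_lt hS y)
    ((finite_sep_lt hS x).subset fun t ht => ⟨ht.1, ht.2.1⟩)]

lemma wsign_mul_wsign_sdiff {S : Set ℤ} (hS : BddAbove S) {i s : ℤ} (hs : s ∈ S) (hi : i ∉ S) :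
    wsign S s * wsign (S \ {s}) i =
      (-1 : ℚ) ^ {t ∈ S | min i s < t ∧ t < max i s}.ncard := by
  have hne : i ≠ s := fun h => hi (h ▸ hs)
  unfold wsign
  rcases hne.lt_or_gt with hlt | hgt
  · have hS' : BddAbove (S \ {s}) := hS.mono Set.sdiff_subset
    have hdel : ∀ p : ℤ → Prop, (∀ t, p t → t ≠ s) → {t ∈ S \ {s} | p t} = {t ∈ S | p t} :=
      fun p hp => Set.ext fun t => ⟨fun h => ⟨h.1.1, h.2⟩, fun h => ⟨⟨h.1, hp t h.2⟩, h.2⟩⟩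
    rw [ncard_sep_lt_eq_add hS' hlt (fun h => h.2 rfl), hdel _ fun t h => h.ne',
      hdel _ fun t h => h.2.ne, min_eq_left hlt.le, max_eq_right hlt.le, pow_add, ← mul_assoc,
      ← pow_add, Even.neg_one_pow ⟨_, rfl⟩, one_mul]
  · have hdel : {t ∈ S \ {s} | i < t} = {t ∈ S | i < t} :=
      Set.ext fun t => ⟨fun h => ⟨h.1.1, h.2⟩, fun h => ⟨⟨h.1, (hgt.trans h.2).ne'⟩, h.2⟩⟩
    rw [ncard_sep_lt_eq_add hS hgt hi, hdel, min_eq_right hgt.le, max_eq_left hgt.le, pow_add,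
      mul_right_comm, ← pow_add, Even.neg_one_pow ⟨_, rfl⟩, one_mul]

lemma thetaL_smul_single (a : ℤ) (c : ℚ) (T : Adm) :
    thetaL a (c • Finsupp.single T 1) = c • theta a T := by
  rw [thetaL, Finsupp.smul_single, smul_eq_mul, mul_one,
    Finsupp.sum_single_index (by rw [zero_smul])]

lemma thetaL_sub_thetaDag_eq_moveTerm {n : ℤ} (hn : n ≠ 0) (S : Adm) (s : ℤ) :
    thetaL (s - n) (thetaDag s S) = moveTerm n S s := by
  by_cases hs : s ∈ S.1
  · rw [thetaDag, if_pos hs]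
    refine (thetaL_smul_single _ _ _).trans ?_
    unfold theta moveTerm
    rw [if_pos hs]
    by_cases ha : s - n ∈ S.1
    · rw [if_pos ⟨ha, by simpa using hn⟩, if_pos ha, smul_zero]
    · rw [if_neg fun h => ha h.1, if_neg ha, smul_smul, wsign_mul_wsign_sdiff S.bddAbove hs ha]
  · rw [thetaDag, if_neg hs, moveTerm, if_neg hs, thetaL, Finsupp.sum_zero_index]

lemma mem_and_sub_notMem_of_moveTerm_ne_zero {n : ℤ} {S : Adm} {s : ℤ} (h : moveTerm n S s ≠ 0) :
    s ∈ S.1 ∧ s - n ∉ S.1 := by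
  unfold moveTerm at h
  split_ifs at h with hs hsn
  · exact absurd rfl h
  · exact ⟨hs, hsn⟩
  · exact absurd rfl h

lemma finite_support_moveTerm (n : ℤ) (S : Adm) :
    (Function.support fun s : ℤ => moveTerm n S s).Finite := by
  obtain ⟨A, hA⟩ := S.bddBelow_compl
  obtain ⟨B, hB⟩ := S.bddAbove
  refine (Set.finite_Icc (A + n) B).subset fun s hs => ?_
  obtain ⟨hs, hsn⟩ := mem_and_sub_notMem_of_moveTerm_ne_zero hs
  have hAs : A ≤ s - n := hA hsn
  exact ⟨by omega, hB hs⟩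

/-- For `n ≠ 0`, the operator `α_n = ∑_i θ_i θ†_{i+n}` acts on a basis wedge
`z^{a_1} ∧ z^{a_2} ∧ ⋯` by `α_n(z^{a_1} ∧ z^{a_2} ∧ ⋯) = ∑_{j≥1} z^{a_1} ∧ ⋯ ∧
z^{a_j - n} ∧ ⋯`, and both defining sums have finite support. -/
theorem stmt_18 (n : ℤ) (hn : n ≠ 0) (S : Adm) :
    (alphaOp n S = ∑ᶠ s : ℤ, moveTerm n S s) ∧
    (Function.support fun i : ℤ => thetaL i (thetaDag (i + n) S)).Finite ∧
    (Function.support fun s : ℤ => moveTerm n S s).Finite := by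
  have hterm : (fun i : ℤ => thetaL i (thetaDag (i + n) S)) = fun i => moveTerm n S (i + n) := by
    ext1 i
    simpa using thetaL_sub_thetaDag_eq_moveTerm hn S (i + n)
  refine ⟨?_, ?_, finite_support_moveTerm n S⟩
  · rw [alphaOp, hterm]
    exact finsum_comp_equiv (Equiv.addRight n)
  · rw [hterm]
    exact (finite_support_moveTerm n S).preimage (add_left_injective n).injOn
end
end
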